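/- arXiv:2105.08104 — 5 statements merged into one kernel-verified Lean document; each statement's English description precedes it below -/
import Mathlib

section
/- Let f and f' be tuples in G^n whose entries split into two sets indexed by a common partition of positions, such that every entry coming from the first set commutes with every entry coming from the second set. If f restricted to each set is Hurwitz-equivalent (as a tuple) to f' restricted to the same set, and the positions agree, then f and f' are Hurwitz-equivalent in G^n. In particular, if all entries of a tuple pairwise commute, then any permutation of the tuple is Hurwitz-equivalent to it. -/
/-- The Hurwitz move `σ_i` on tuples in `G^n`. -/
def hurwitzMove {G : Type*} [Group G] {n : ℕ} (i : ℕ) (h : i + 1 < n) (t : Fin n → G) :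
    Fin n → G :=
  fun j =>
    if (j : ℕ) = i then t ⟨i + 1, h⟩
    else if (j : ℕ) = i + 1 then (t ⟨i + 1, h⟩)⁻¹ * t ⟨i, Nat.lt_of_succ_lt h⟩ * t ⟨i + 1, h⟩
    else t j

/-- One tuple is obtained from another by a single Hurwitz move. -/
inductive HurwitzStep {G : Type*} [Group G] {n : ℕ} : (Fin n → G) → (Fin n → G) → Prop
  | move (i : ℕ) (h : i + 1 < n) (t : Fin n → G) : HurwitzStep t (hurwitzMove i h t)

/-- Hurwitz equivalence: the equivalence relation generated by Hurwitz moves. -/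
def HurwitzEquiv {G : Type*} [Group G] {n : ℕ} : (Fin n → G) → (Fin n → G) → Prop :=
  Relation.EqvGen HurwitzStep

/-!
When `t i` and `t (i + 1)` commute, the Hurwitz move `σ_i` just swaps them. Hence for a tuple
with pairwise commuting entries, composing with an adjacent transposition is a Hurwitz
equivalence; since adjacent transpositions generate the symmetric group and reordering keeps
the entries pairwise commuting, every permutation is.
-/

section

open Equiv

variable {G : Type*} [Group G]

theorem hurwitzMove_eq_comp_swap {n : ℕ} (t : Fin (n + 1) → G) (i : Fin n)
    (hi : Commute (t i.castSucc) (t i.succ)) :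
    hurwitzMove i (Nat.succ_lt_succ i.isLt) t = t ∘ swap i.castSucc i.succ := by
  funext j
  simp only [hurwitzMove, Function.comp_apply]
  split_ifs with hj hj'
  · rw [show j = i.castSucc from Fin.ext hj, swap_apply_left]; rfl
  · rw [show j = i.succ from Fin.ext hj', swap_apply_right]
    change (t i.succ)⁻¹ * t i.castSucc * t i.succ = t i.castSucc
    rw [mul_assoc, hi.eq, inv_mul_cancel_left]
  · rw [swap_apply_of_ne_of_ne (fun h => hj (by simp [h])) (fun h => hj' (by simp [h]))]

theorem hurwitzEquiv_comp_swap_castSucc_succ {n : ℕ} (t : Fin (n + 1) → G) (i : Fin n)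
    (hi : Commute (t i.castSucc) (t i.succ)) :
    HurwitzEquiv (t ∘ swap i.castSucc i.succ) t :=
  .symm _ _ <| .rel _ _ <| hurwitzMove_eq_comp_swap t i hi ▸ .move _ _ t

theorem hurwitzEquiv_comp_perm_of_pairwise_commute {n : ℕ} (π : Perm (Fin (n + 1))) :
    ∀ t : Fin (n + 1) → G, (∀ i j, Commute (t i) (t j)) → HurwitzEquiv (t ∘ π) t := by
  have hπ : π ∈ Submonoid.closure (Set.range fun i : Fin n ↦ swap i.castSucc i.succ) :=
    Perm.mclosure_swap_castSucc_succ n ▸ Submonoid.mem_top π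
  induction hπ using Submonoid.closure_induction with
  | mem _ hσ =>
    obtain ⟨i, rfl⟩ := hσ
    exact fun t ht => hurwitzEquiv_comp_swap_castSucc_succ t i (ht _ _)
  | one => exact fun t _ => .refl t
  | mul σ τ _ _ hσ hτ =>
    intro t ht
    exact .trans _ _ _ (hτ (t ∘ σ) fun i j => ht _ _) (hσ t ht)

end

/-- If all entries of a tuple pairwise commute, then any permutation of the tuple is
Hurwitz-equivalent to it. -/
theorem hurwitzEquiv_perm_of_commute {G : Type*} [Group G] {n : ℕ} (t : Fin n → G)
    (hcomm : ∀ i j : Fin n, t i * t j = t j * t i) (π : Equiv.Perm (Fin n)) :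
    HurwitzEquiv (t ∘ π) t := by
  cases n with
  | zero => exact Subsingleton.elim t (t ∘ π) ▸ .refl t
  | succ n => exact hurwitzEquiv_comp_perm_of_pairwise_commute π t hcomm
end

section
/- In G(m, 1, n), the reflection length of an element g equals n minus the number of cycles of g of weight 0; that is, ℓ_R(g) = n − #{cycles C of g whose total weight is 0 in ℤ/mℤ}. -/
/-!
Upper bound: if `g ≠ 1`, multiplying `g` on the right by a single reflection creates a new cycle
of weight `0` and leaves the other weight-`0` cycles intact. When `g` has trivial underlying
permutation, a diagonal reflection cancels one nonzero weight; otherwise, for `x` the least element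
of a nontrivial cycle of `u`, the reflection `[(x u(x)); a_x]` cuts `u(x)` out of its cycle as a
fixed point of weight `0`, without changing the weight of the rest of the cycle.

Lower bound: an injective additive character `ψ` of `ℤ/mℤ` gives a monomial representation of
`G(m,1,n)` on `Kⁿ`. A reflection fixes a hyperplane and the codimension of fixed spaces is
subadditive, so a product of `ℓ` reflections fixes a subspace of dimension at least `n - ℓ`.
A vector fixed by `g` vanishes on every cycle of nonzero weight and is determined on each cycle of
weight `0` by a single coordinate, so that dimension is at most the number of weight-`0` cycles.
-/

/-- The wreath product `(ℤ/mℤ) ≀ S_n`, i.e. the group `G(m, 1, n)`: an element is a pair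
`[u; (a_1, ..., a_n)]` of a permutation `u ∈ S_n` and a weight vector in `(ℤ/mℤ)^n`. -/
structure WP (m n : ℕ) where
  perm : Equiv.Perm (Fin n)
  wt : Fin n → ZMod m

namespace WP

variable {m n : ℕ}

theorem ext' {g h : WP m n} (h1 : g.perm = h.perm) (h2 : ∀ i, g.wt i = h.wt i) : g = h := by
  cases g; cases h
  simp only [mk.injEq]
  exact ⟨h1, funext h2⟩

instance : Mul (WP m n) :=
  ⟨fun g h => ⟨g.perm * h.perm, fun i => g.wt (h.perm i) + h.wt i⟩⟩

instance : One (WP m n) := ⟨⟨1, fun _ => 0⟩⟩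

instance : Inv (WP m n) := ⟨fun g => ⟨g.perm⁻¹, fun i => -g.wt (g.perm⁻¹ i)⟩⟩

instance : Group (WP m n) where
  mul_assoc a b c := ext' (mul_assoc a.perm b.perm c.perm) (fun i => add_assoc _ _ _)
  one_mul a := ext' (one_mul a.perm) (fun i => zero_add _)
  mul_one a := ext' (mul_one a.perm) (fun i => add_zero _)
  inv_mul_cancel a := ext' (inv_mul_cancel a.perm) (fun i => by
    show -a.wt (a.perm⁻¹ (a.perm i)) + a.wt i = 0
    simp)

end WP

/-- A reflection in `G(m,1,n)`: either a transposition-like reflection `[(i j); a]`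
(underlying transposition `(i j)`, weight `a` at `i` and `−a` at `j`, `0` elsewhere), or a
diagonal reflection (identity underlying permutation, a single nonzero weight). -/
def IsReflection {m n : ℕ} (t : WP m n) : Prop :=
  (∃ i j : Fin n, i ≠ j ∧ t.perm = Equiv.swap i j ∧
      t.wt j = -t.wt i ∧ ∀ k, k ≠ i → k ≠ j → t.wt k = 0) ∨
  (t.perm = 1 ∧ ∃ i : Fin n, t.wt i ≠ 0 ∧ ∀ k, k ≠ i → t.wt k = 0)

open Equiv Equiv.Perm Finset Module

theorem AddChar.map_sum_eq_prod {A M ι : Type*} [AddCommMonoid A] [CommMonoid M]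
    (ψ : AddChar A M) (s : Finset ι) (f : ι → A) : ψ (∑ i ∈ s, f i) = ∏ i ∈ s, ψ (f i) := by
  simpa [← ofAdd_sum] using map_prod ψ.toMonoidHom (fun i => Multiplicative.ofAdd (f i)) s

def twoZPowAddChar : AddChar ℤ ℚ where
  toFun a := (2 : ℚ) ^ a
  map_zero_eq_one' := zpow_zero 2
  map_add_eq_mul' := zpow_add₀ two_ne_zero

theorem injective_twoZPowAddChar : Function.Injective twoZPowAddChar :=
  zpow_right_injective₀ (by norm_num) (by norm_num)

namespace Module.End

variable {K V : Type*} [Field K] [AddCommGroup V] [Module K V]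

theorem finrank_range_le_one_of_forall_mem_span (f : Module.End K V) (d : V)
    (h : ∀ v, f v ∈ K ∙ d) : finrank K (LinearMap.range f) ≤ 1 :=
  (Submodule.finrank_mono (by rintro _ ⟨v, rfl⟩; exact h v)).trans
    (by simpa using finrank_span_le_card ({d} : Set V))

variable [FiniteDimensional K V]

theorem finrank_range_mul_sub_one_le (f g : Module.End K V) :
    finrank K (LinearMap.range (f * g - 1)) ≤
      finrank K (LinearMap.range (f - 1)) + finrank K (LinearMap.range (g - 1)) := by
  have hfg : f * g - 1 = f ∘ₗ (g - 1) + (f - 1) := by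
    rw [← Module.End.mul_eq_comp]; noncomm_ring
  calc finrank K (LinearMap.range (f * g - 1))
      ≤ finrank K ↥((LinearMap.range (g - 1)).map f ⊔ LinearMap.range (f - 1)) := by
        rw [hfg, ← LinearMap.range_comp]
        exact Submodule.finrank_mono (LinearMap.range_add_le _ _)
    _ ≤ _ := by
        have := Submodule.finrank_map_le f (LinearMap.range (g - 1))
        have := Submodule.finrank_add_le_finrank_add_finrank
          ((LinearMap.range (g - 1)).map f) (LinearMap.range (f - 1))
        omega

theorem finrank_range_list_prod_sub_one_le (L : List (Module.End K V)) :
    finrank K (LinearMap.range (L.prod - 1)) ≤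
      (L.map fun f => finrank K (LinearMap.range (f - 1))).sum := by
  induction L with
  | nil =>
    rw [List.prod_nil, LinearMap.range_eq_bot.2 (sub_self _), finrank_bot]
    exact Nat.zero_le _
  | cons f L ih =>
    rw [List.prod_cons, List.map_cons, List.sum_cons]
    exact (finrank_range_mul_sub_one_le f L.prod).trans (by omega)

end Module.End

namespace Equiv.Perm

variable {α : Type*} {σ : Perm α} {x y : α}

theorem SameCycle.mem_of_mapsTo [Finite α] {s : Set α} (h : σ.SameCycle x y)
    (hs : Set.MapsTo σ s s) (hx : x ∈ s) : y ∈ s := by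
  obtain ⟨i, rfl⟩ := h.exists_nat_pow_eq
  exact hs.perm_pow i hx

theorem exists_sameCycle_forall_le [Fintype α] [LinearOrder α] (σ : Perm α) (x : α) :
    ∃ y, σ.SameCycle x y ∧ ∀ z, σ.SameCycle y z → y ≤ z := by
  classical
  obtain ⟨y, hy, hmin⟩ := (univ.filter (σ.SameCycle x)).exists_min_image id
    ⟨x, mem_filter.2 ⟨mem_univ x, SameCycle.refl σ x⟩⟩
  rw [mem_filter] at hy
  exact ⟨y, hy.2, fun z hz => hmin z (by simpa using hy.2.trans hz)⟩

variable [DecidableEq α]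

theorem sameCycle_swap_apply (σ : Perm α) (x z : α) : σ.SameCycle z (swap x (σ x) z) := by
  rw [swap_apply_def]
  split_ifs with hzx hzσx
  · exact hzx ▸ (SameCycle.refl σ z).apply_right
  · exact hzσx ▸ (SameCycle.refl σ x).apply_right.symm
  · exact SameCycle.refl σ z

theorem sameCycle_mul_swap_iff [Finite α] {k l : α} (hk : k ≠ σ x) (hl : l ≠ σ x) :
    (σ * swap x (σ x)).SameCycle k l ↔ σ.SameCycle k l := by
  set τ := σ * swap x (σ x)
  have hτx : τ x = σ (σ x) := by simp [τ]
  have hτσx : τ (σ x) = σ x := by simp [τ]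
  constructor
  · intro h
    refine h.mem_of_mapsTo (s := {a | σ.SameCycle k a}) (fun a ha => ?_) (SameCycle.refl σ k)
    exact (ha.trans (sameCycle_swap_apply σ x a)).apply_right
  · intro h
    -- the τ-cycle of `k`, with `σ x` put back in if that cycle passes through `x`
    have hs : Set.MapsTo σ {a | τ.SameCycle k a ∨ a = σ x ∧ τ.SameCycle k x}
        {a | τ.SameCycle k a ∨ a = σ x ∧ τ.SameCycle k x} := by
      rintro a (ha | ⟨rfl, hkx⟩)
      · by_cases hax : a = x
        · exact Or.inr ⟨hax ▸ rfl, hax ▸ ha⟩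
        by_cases haσx : a = σ x
        · exact absurd (ha.symm.eq_of_left (haσx ▸ hτσx)).symm (haσx ▸ hk)
        · have : τ a = σ a := by simp [τ, swap_apply_of_ne_of_ne hax haσx]
          exact Or.inl (this ▸ ha.apply_right)
      · exact Or.inl (hτx ▸ hkx.apply_right)
    exact (h.mem_of_mapsTo hs (Or.inl (SameCycle.refl τ k))).resolve_right fun h' => hl h'.1

theorem filter_sameCycle_mul_swap [Fintype α] {k : α} (hk : k ≠ σ x) :
    univ.filter ((σ * swap x (σ x)).SameCycle k) = (univ.filter (σ.SameCycle k)).erase (σ x) := by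
  ext l
  simp only [mem_filter, mem_univ, true_and, mem_erase]
  by_cases hl : l = σ x
  · subst hl
    refine iff_of_false (fun h => hk (h.symm.eq_of_left ?_).symm) (fun h => h.1 rfl)
    simp [Function.IsFixedPt]
  · rw [sameCycle_mul_swap_iff hk hl]
    exact (and_iff_right hl).symm

end Equiv.Perm

namespace WP

variable {m n : ℕ}

@[simp] lemma mul_perm (g h : WP m n) : (g * h).perm = g.perm * h.perm := rfl
@[simp] lemma mul_wt (g h : WP m n) (i : Fin n) : (g * h).wt i = g.wt (h.perm i) + h.wt i := rfl
@[simp] lemma one_perm : (1 : WP m n).perm = 1 := rfl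
@[simp] lemma one_wt (i : Fin n) : (1 : WP m n).wt i = 0 := rfl
@[simp] lemma inv_perm (g : WP m n) : g⁻¹.perm = g.perm⁻¹ := rfl
@[simp] lemma inv_wt (g : WP m n) (i : Fin n) : g⁻¹.wt i = -g.wt (g.perm⁻¹ i) := rfl

theorem _root_.IsReflection.inv {t : WP m n} (ht : IsReflection t) : IsReflection t⁻¹ := by
  rcases ht with ⟨i, j, hij, hp, hj, h0⟩ | ⟨hp, i, hi, h0⟩
  · refine Or.inl ⟨i, j, hij, by simp [hp], by simp [hp, hj], fun k hki hkj => ?_⟩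
    simp [hp, swap_apply_of_ne_of_ne hki hkj, h0 k hki hkj]
  · exact Or.inr ⟨by simp [hp], i, by simpa [hp] using hi, fun k hk => by simp [hp, h0 k hk]⟩

@[simps]
def transpositionReflection (i j : Fin n) (a : ZMod m) : WP m n :=
  ⟨swap i j, Pi.single i a - Pi.single j a⟩

@[simps]
def diagonalReflection (i : Fin n) (b : ZMod m) : WP m n :=
  ⟨1, Pi.single i b⟩

lemma isReflection_transpositionReflection {i j : Fin n} (hij : i ≠ j) (a : ZMod m) :
    IsReflection (transpositionReflection i j a) :=
  Or.inl ⟨i, j, hij, rfl, by simp [hij, hij.symm],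
    fun k hki hkj => by simp [hki, hkj]⟩

lemma isReflection_diagonalReflection (i : Fin n) {b : ZMod m} (hb : b ≠ 0) :
    IsReflection (diagonalReflection i b) :=
  Or.inr ⟨rfl, i, by simpa using hb, fun k hk => by simp [hk]⟩

open scoped Classical in
def cycleWeight (g : WP m n) (x : Fin n) : ZMod m :=
  ∑ y ∈ univ.filter (fun y : Fin n => g.perm.SameCycle x y), g.wt y

open scoped Classical in
def zeroCycleReps (g : WP m n) : Finset (Fin n) :=
  univ.filter fun x : Fin n => (∀ y : Fin n, g.perm.SameCycle x y → x ≤ y) ∧ g.cycleWeight x = 0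

lemma mem_zeroCycleReps {g : WP m n} {x : Fin n} :
    x ∈ g.zeroCycleReps ↔ (∀ y, g.perm.SameCycle x y → x ≤ y) ∧ g.cycleWeight x = 0 := by
  simp [zeroCycleReps]

lemma mem_zeroCycleReps_of_apply_eq_self {g : WP m n} {x : Fin n} (hx : g.perm x = x) :
    x ∈ g.zeroCycleReps ↔ g.wt x = 0 := by
  have hcyc : univ.filter (fun y => g.perm.SameCycle x y) = {x} := by
    ext y
    simpa [eq_comm] using ⟨fun h => h.eq_of_left hx, fun h => h ▸ SameCycle.refl _ _⟩
  simp only [mem_zeroCycleReps, cycleWeight, hcyc, sum_singleton, and_iff_right_iff_imp]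
  exact fun _ y hy => (hy.eq_of_left hx).le

lemma mem_zeroCycleReps_of_perm_eq_one {g : WP m n} (hg : g.perm = 1) {x : Fin n} :
    x ∈ g.zeroCycleReps ↔ g.wt x = 0 :=
  mem_zeroCycleReps_of_apply_eq_self (by simp [hg])

lemma card_zeroCycleReps_one : #(zeroCycleReps (1 : WP m n)) = n := by
  rw [eq_univ_of_forall fun x => (mem_zeroCycleReps_of_perm_eq_one one_perm).2 (one_wt x),
    card_univ, Fintype.card_fin]

lemma exists_isReflection_card_lt_of_perm_eq_one {g : WP m n} (hg : g ≠ 1) (hσ : g.perm = 1) :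
    ∃ t, IsReflection t ∧ #g.zeroCycleReps < #(g * t).zeroCycleReps := by
  obtain ⟨x, hx⟩ : ∃ x, g.wt x ≠ 0 := by
    by_contra! h
    exact hg (ext' hσ h)
  set t := diagonalReflection x (-g.wt x)
  have hσt : (g * t).perm = 1 := by simp [t, hσ]
  refine ⟨t, isReflection_diagonalReflection x (neg_ne_zero.2 hx), card_lt_card
    (ssubset_iff.2 ⟨x, (mem_zeroCycleReps_of_perm_eq_one hσ).not.2 hx, fun k hk => ?_⟩)⟩
  rw [mem_zeroCycleReps_of_perm_eq_one hσt]
  rcases mem_insert.1 hk with rfl | hk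
  · simp [t]
  · rw [mem_zeroCycleReps_of_perm_eq_one hσ] at hk
    have hkx : k ≠ x := fun h => hx (h ▸ hk)
    simp [t, hk, hkx]

section Splitting

variable {g : WP m n} {x : Fin n}

lemma cycleWeight_mul_transpositionReflection (hx : g.perm x ≠ x) {k : Fin n}
    (hk : k ≠ g.perm x) :
    (g * transpositionReflection x (g.perm x) (g.wt x)).cycleWeight k = g.cycleWeight k := by
  set C := univ.filter (g.perm.SameCycle k)
  have hC : ∀ l, l ∈ C ↔ swap x (g.perm x) l ∈ C := fun l => by
    simpa [C] using ⟨fun h => h.trans (sameCycle_swap_apply _ _ _),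
      fun h => h.trans (sameCycle_swap_apply _ _ _).symm⟩
  have hxC : x ∈ C ↔ g.perm x ∈ C := by simp [C, sameCycle_apply_right]
  have hwt : (g * transpositionReflection x (g.perm x) (g.wt x)).wt (g.perm x) = 0 := by
    simp [hx]
  rw [cycleWeight, cycleWeight, mul_perm, transpositionReflection_perm,
    filter_sameCycle_mul_swap hk, sum_erase _ hwt]
  simp only [mul_wt, transpositionReflection_perm, transpositionReflection_wt, Pi.sub_apply,
    sum_add_distrib, sum_sub_distrib, sum_pi_single']
  rw [sum_equiv (swap x (g.perm x)) hC (fun _ _ => rfl)]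
  simp [C, hxC]

lemma apply_notMem_zeroCycleReps (hx : g.perm x ≠ x)
    (hmin : ∀ y, g.perm.SameCycle x y → x ≤ y) : g.perm x ∉ g.zeroCycleReps := fun h =>
  hx (le_antisymm ((mem_zeroCycleReps.1 h).1 x (SameCycle.refl _ x).apply_right.symm)
    (hmin _ (SameCycle.refl _ x).apply_right))

lemma insert_zeroCycleReps_subset (hx : g.perm x ≠ x) (hmin : ∀ y, g.perm.SameCycle x y → x ≤ y) :
    insert (g.perm x) g.zeroCycleReps ⊆
      (g * transpositionReflection x (g.perm x) (g.wt x)).zeroCycleReps := by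
  intro k hk
  rcases mem_insert.1 hk with rfl | hk
  · rw [mem_zeroCycleReps_of_apply_eq_self (by simp)]
    simp [hx]
  · have hkx : k ≠ g.perm x := fun h => apply_notMem_zeroCycleReps hx hmin (h ▸ hk)
    obtain ⟨hkmin, hkw⟩ := mem_zeroCycleReps.1 hk
    refine mem_zeroCycleReps.2 ⟨fun l hl => hkmin l ?_,
      (cycleWeight_mul_transpositionReflection hx hkx).trans hkw⟩
    have hl' : l ∈ univ.filter ((g.perm * swap x (g.perm x)).SameCycle k) := by simpa using hl
    rw [filter_sameCycle_mul_swap hkx, mem_erase, mem_filter] at hl'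
    exact hl'.2.2

end Splitting

lemma exists_isReflection_card_lt_of_perm_ne_one {g : WP m n} (hσ : g.perm ≠ 1) :
    ∃ t, IsReflection t ∧ #g.zeroCycleReps < #(g * t).zeroCycleReps := by
  obtain ⟨z, hz⟩ : ∃ z, g.perm z ≠ z := by
    by_contra! h
    exact hσ (Equiv.ext h)
  obtain ⟨x, hzx, hmin⟩ := exists_sameCycle_forall_le g.perm z
  have hx : g.perm x ≠ x := fun h => hz (hzx.apply_eq_self_iff.2 h)
  exact ⟨_, isReflection_transpositionReflection hx.symm (g.wt x), card_lt_card
    (ssubset_iff.2 ⟨_, apply_notMem_zeroCycleReps hx hmin, insert_zeroCycleReps_subset hx hmin⟩)⟩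

lemma exists_isReflection_card_lt {g : WP m n} (hg : g ≠ 1) :
    ∃ t, IsReflection t ∧ #g.zeroCycleReps < #(g * t).zeroCycleReps := by
  by_cases hσ : g.perm = 1
  · exact exists_isReflection_card_lt_of_perm_eq_one hg hσ
  · exact exists_isReflection_card_lt_of_perm_ne_one hσ

theorem exists_isReflection_list (g : WP m n) : ∃ L : List (WP m n),
    (∀ t ∈ L, IsReflection t) ∧ L.prod = g ∧ L.length + #g.zeroCycleReps ≤ n := by
  induction hk : n - #g.zeroCycleReps using Nat.strong_induction_on generalizing g with
  | _ k ih =>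
    by_cases hg : g = 1
    · exact ⟨[], by simp, by simp [hg], by simp [hg, card_zeroCycleReps_one]⟩
    obtain ⟨t, ht, hlt⟩ := exists_isReflection_card_lt hg
    have hle : #(g * t).zeroCycleReps ≤ n := by simpa using card_le_univ (g * t).zeroCycleReps
    obtain ⟨L, hL, hprod, hlen⟩ := ih _ (by omega) (g * t) rfl
    refine ⟨L ++ [t⁻¹], ?_, by simp [hprod], ?_⟩
    · simpa [or_imp, forall_and] using ⟨hL, ht.inv⟩
    · rw [List.length_append, List.length_singleton]
      omega

section MonomialRep

variable {K : Type*} [Field K] (ψ : AddChar (ZMod m) K)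

def monomialRep : Representation K (WP m n) (Fin n → K) where
  toFun g :=
    { toFun := fun v i => ψ (g.wt (g.perm⁻¹ i)) * v (g.perm⁻¹ i)
      map_add' := fun u v => funext fun i => mul_add _ _ _
      map_smul' := fun c v => funext fun i => mul_left_comm _ _ _ }
  map_one' := by ext v i; simp
  map_mul' g h := by ext v i; simp [AddChar.map_add_eq_mul, mul_assoc]

lemma monomialRep_apply (g : WP m n) (v : Fin n → K) (i : Fin n) :
    monomialRep ψ g v i = ψ (g.wt (g.perm⁻¹ i)) * v (g.perm⁻¹ i) := rfl

lemma finrank_range_monomialRep_sub_one_le {t : WP m n} (ht : IsReflection t) :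
    finrank K (LinearMap.range (monomialRep ψ t - 1)) ≤ 1 := by
  rcases ht with ⟨i, j, hij, hp, hj, h0⟩ | ⟨hp, i, -, h0⟩
  · have hψ : ψ (-t.wt i) * ψ (t.wt i) = 1 := by
      rw [← AddChar.map_add_eq_mul, neg_add_cancel, AddChar.map_zero_eq_one]
    refine Module.End.finrank_range_le_one_of_forall_mem_span _
      (Pi.single j 1 - ψ (-t.wt i) • Pi.single i 1) fun v =>
        Submodule.mem_span_singleton.2 ⟨ψ (t.wt i) * v i - v j, funext fun k => ?_⟩
    by_cases hki : k = i
    · subst hki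
      simp only [Pi.sub_apply, Pi.smul_apply, smul_eq_mul, Pi.single_eq_same,
        Pi.single_eq_of_ne hij, LinearMap.sub_apply, End.one_apply, monomialRep_apply, hp,
        swap_inv, swap_apply_left, hj]
      linear_combination (-v k) * hψ
    by_cases hkj : k = j
    · subst hkj
      simp [monomialRep_apply, hp, hki]
    · simp [monomialRep_apply, hp, hki, hkj, swap_apply_of_ne_of_ne hki hkj, h0 k hki hkj]
  · refine Module.End.finrank_range_le_one_of_forall_mem_span _ (Pi.single i 1) fun v =>
      Submodule.mem_span_singleton.2 ⟨(ψ (t.wt i) - 1) * v i, funext fun k => ?_⟩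
    by_cases hki : k = i
    · subst hki
      simp [monomialRep_apply, hp, sub_mul]
    · simp [monomialRep_apply, hp, hki, h0 k hki]

lemma apply_perm_of_monomialRep_eq_self {g : WP m n} {v : Fin n → K}
    (hv : monomialRep ψ g v = v) (y : Fin n) : v (g.perm y) = ψ (g.wt y) * v y := by
  simpa [monomialRep_apply] using (congr_fun hv (g.perm y)).symm

lemma apply_eq_zero_of_sameCycle {g : WP m n} {v : Fin n → K} (hv : monomialRep ψ g v = v)
    {x y : Fin n} (hxy : g.perm.SameCycle x y) (hx : v x = 0) : v y = 0 :=
  hxy.mem_of_mapsTo (s := {a | v a = 0})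
    (fun a (ha : v a = 0) => by simp [apply_perm_of_monomialRep_eq_self ψ hv, ha]) hx

variable {ψ}

lemma apply_eq_zero_of_cycleWeight_ne_zero (hψ : Function.Injective ψ) {g : WP m n}
    {v : Fin n → K} (hv : monomialRep ψ g v = v) {x : Fin n} (hx : g.cycleWeight x ≠ 0) :
    v x = 0 := by
  classical
  set C := univ.filter (g.perm.SameCycle x)
  -- `v ∘ g.perm` and `v` have the same product over the cycle, which forces `ψ (weight) = 1`
  -- unless one factor vanishes
  have hprod : ∏ y ∈ C, v y = ψ (g.cycleWeight x) * ∏ y ∈ C, v y := calc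
    ∏ y ∈ C, v y = ∏ y ∈ C, v (g.perm y) :=
      (prod_equiv g.perm (by simp [C, sameCycle_apply_right]) fun _ _ => rfl).symm
    _ = ∏ y ∈ C, ψ (g.wt y) * v y :=
      prod_congr rfl fun y _ => apply_perm_of_monomialRep_eq_self ψ hv y
    _ = ψ (g.cycleWeight x) * ∏ y ∈ C, v y := by
      rw [prod_mul_distrib, cycleWeight, AddChar.map_sum_eq_prod]
  have hψx : 1 - ψ (g.cycleWeight x) ≠ 0 :=
    sub_ne_zero.2 fun h => hx (AddChar.injective_iff.1 hψ h.symm)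
  have hzero : (1 - ψ (g.cycleWeight x)) * ∏ y ∈ C, v y = 0 := by linear_combination hprod
  obtain ⟨y, hy, hvy⟩ := prod_eq_zero_iff.1 ((mul_eq_zero.1 hzero).resolve_left hψx)
  exact apply_eq_zero_of_sameCycle ψ hv (mem_filter.1 hy).2.symm hvy

lemma eq_zero_of_forall_mem_zeroCycleReps (hψ : Function.Injective ψ) {g : WP m n}
    {v : Fin n → K} (hv : monomialRep ψ g v = v) (h0 : ∀ x ∈ g.zeroCycleReps, v x = 0) :
    v = 0 := by
  funext k
  obtain ⟨x, hkx, hmin⟩ := exists_sameCycle_forall_le g.perm k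
  refine apply_eq_zero_of_sameCycle ψ hv hkx.symm ?_
  by_cases hw : g.cycleWeight x = 0
  · exact h0 x (mem_zeroCycleReps.2 ⟨hmin, hw⟩)
  · exact apply_eq_zero_of_cycleWeight_ne_zero hψ hv hw

lemma finrank_ker_monomialRep_sub_one_le (hψ : Function.Injective ψ) (g : WP m n) :
    finrank K (LinearMap.ker (monomialRep ψ g - 1)) ≤ #g.zeroCycleReps := by
  let restrict := LinearMap.funLeft K K ((↑) : g.zeroCycleReps → Fin n) ∘ₗ
    (LinearMap.ker (monomialRep ψ g - 1)).subtype
  have hinj : Function.Injective restrict := by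
    refine (injective_iff_map_eq_zero restrict).2 fun v hv => Subtype.ext ?_
    refine eq_zero_of_forall_mem_zeroCycleReps hψ ?_ fun x hx => congr_fun hv ⟨x, hx⟩
    exact sub_eq_zero.1 (LinearMap.mem_ker.1 v.2)
  simpa using LinearMap.finrank_le_finrank_of_injective hinj

lemma card_sub_le_length_of_injective (hψ : Function.Injective ψ) {L : List (WP m n)}
    (hL : ∀ t ∈ L, IsReflection t) : n - #L.prod.zeroCycleReps ≤ L.length := by
  have hrank := LinearMap.finrank_range_add_finrank_ker (monomialRep ψ L.prod - 1)
  rw [Module.finrank_fintype_fun_eq_card, Fintype.card_fin] at hrank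
  have hker := finrank_ker_monomialRep_sub_one_le hψ L.prod
  have hrange : finrank K (LinearMap.range (monomialRep ψ L.prod - 1)) ≤ L.length := by
    rw [map_list_prod]
    refine (Module.End.finrank_range_list_prod_sub_one_le _).trans ?_
    refine (List.sum_le_card_nsmul _ 1 ?_).trans (by simp)
    simp only [List.map_map, List.mem_map, Function.comp_apply]
    rintro _ ⟨t, ht, rfl⟩
    exact finrank_range_monomialRep_sub_one_le ψ (hL t ht)
  omega

-- `ZMod.stdAddChar` needs `m ≠ 0`; for `m = 0`, `ZMod 0` is `ℤ` and `a ↦ 2 ^ a` is injective.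
lemma card_sub_le_length {L : List (WP m n)} (hL : ∀ t ∈ L, IsReflection t) :
    n - #L.prod.zeroCycleReps ≤ L.length := by
  rcases eq_zero_or_neZero m with rfl | _
  · exact card_sub_le_length_of_injective injective_twoZPowAddChar hL
  · exact card_sub_le_length_of_injective ZMod.injective_stdAddChar hL

end MonomialRep

end WP

open scoped Classical in
theorem reflection_length_Gm1n_general (m n : ℕ) (g : WP m n) :
    sInf {l : ℕ | ∃ L : List (WP m n),
        L.length = l ∧ (∀ t ∈ L, IsReflection t) ∧ L.prod = g} =
      n - (Finset.univ.filter (fun x : Fin n =>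
        (∀ y : Fin n, g.perm.SameCycle x y → x ≤ y) ∧
        (∑ y ∈ Finset.univ.filter (fun y : Fin n => g.perm.SameCycle x y), g.wt y) = 0)).card := by
  change _ = n - #g.zeroCycleReps
  obtain ⟨L, hL, hprod, hlen⟩ := WP.exists_isReflection_list g
  apply le_antisymm
  · refine le_trans (Nat.sInf_le ⟨L, rfl, hL, hprod⟩) ?_
    omega
  · refine le_csInf ⟨L.length, L, rfl, hL, hprod⟩ ?_
    rintro l ⟨L', rfl, hL', rfl⟩
    exact WP.card_sub_le_length hL'

open scoped Classical in
/-- In `G(m,1,n)`, the reflection length of `g` equals `n` minus the number of cycles of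
`g` of weight `0` (a cycle is counted via its minimal element). -/
theorem reflection_length_Gm1n (m n : ℕ) (hm : 0 < m) (g : WP m n) :
    sInf {l : ℕ | ∃ L : List (WP m n),
        L.length = l ∧ (∀ t ∈ L, IsReflection t) ∧ L.prod = g} =
      n - (Finset.univ.filter (fun x : Fin n =>
        (∀ y : Fin n, g.perm.SameCycle x y → x ≤ y) ∧
        (∑ y ∈ Finset.univ.filter (fun y : Fin n => g.perm.SameCycle x y), g.wt y) = 0)).card :=
  reflection_length_Gm1n_general m n g
end

section
/- Let m ≥ 1 and let d_1, ..., d_n be integers, with r = gcd(m, d_1, ..., d_n). Suppose a_1, ..., a_{n-1} and a'_1, ..., a'_{n-1} are integers with a_j ≡ a'_j (mod r) for all j. Then there exists an n × (n-1) integer matrix M = (m_{ij}) with m_{ij} = m_{ji} for 1 ≤ i ≠ j ≤ n-1, such that for each j = 1,...,n-1: a_j + Σ_{i=1}^{n} d_i m_{ij} ≡ a'_j (mod m). -/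
theorem finset_gcd_eq_sum {ι : Type*} [DecidableEq ι] (s : Finset ι) (f : ι → ℤ) :
    ∃ e : ι → ℤ, ∑ i ∈ s, f i * e i = s.gcd f := by
  induction s using Finset.induction with
  | empty => exact ⟨0, by simp⟩
  | @insert b s ha ih =>
    obtain ⟨e, he⟩ := ih
    obtain ⟨x, y, hxy⟩ : ∃ x y, gcd (f b) (s.gcd f) = f b * x + s.gcd f * y :=
      ⟨_, _, by rw [← Int.coe_gcd, Int.gcd_eq_gcd_ab]⟩
    refine ⟨fun i => if i = b then x else e i * y, ?_⟩
    have key : ∑ i ∈ s, f i * (if i = b then x else e i * y)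
        = (∑ i ∈ s, f i * e i) * y := by
      rw [Finset.sum_mul]
      refine Finset.sum_congr rfl fun i hi => ?_
      rw [if_neg (by rintro rfl; exact ha hi)]; ring
    simp only [Finset.sum_insert ha, Finset.gcd_insert, hxy, if_pos rfl, key, he]
    simp

/-- Let `r = gcd(m, d_1, ..., d_n)` and suppose `a_j ≡ a'_j (mod r)` for all `j`. Then
there is an `n × (n−1)` integer matrix `M = (m_{ij})`, symmetric in its upper
`(n−1) × (n−1)` block off the diagonal, with
`a_j + Σ_{i=1}^{n} d_i m_{ij} ≡ a'_j (mod m)` for each `j`. -/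
theorem exists_symmetric_matrix (n : ℕ) (m : ℤ) (hm : 1 ≤ m)
    (d : Fin (n + 1) → ℤ) (a a' : Fin n → ℤ)
    (h : ∀ j : Fin n, gcd m (Finset.univ.gcd d) ∣ (a j - a' j)) :
    ∃ M : Fin (n + 1) → Fin n → ℤ,
      (∀ i j : Fin n, i ≠ j → M i.castSucc j = M j.castSucc i) ∧
      ∀ j : Fin n, m ∣ (a j + (∑ i, d i * M i j) - a' j) := by
  obtain ⟨e, he⟩ := finset_gcd_eq_sum Finset.univ d
  set g : ℤ := Finset.univ.gcd d with hg
  obtain ⟨α, β, hαβ⟩ : ∃ x y, gcd m g = m * x + g * y :=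
    ⟨_, _, by rw [← Int.coe_gcd, Int.gcd_eq_gcd_ab]⟩
  have h' : ∀ j, ∃ c, a j - a' j = gcd m g * c := fun j => h j
  choose w hw using h'
  have hA : ∑ i : Fin n, d i.castSucc * e i.castSucc
      = g - d (Fin.last n) * e (Fin.last n) := by
    rw [Fin.sum_univ_castSucc] at he; linarith [he]
  obtain ⟨B', hB'⟩ : g ∣ ∑ i : Fin n, d i.castSucc * (-(w i)) :=
    Finset.dvd_sum fun i _ =>
      Dvd.dvd.mul_right (Finset.gcd_dvd (Finset.mem_univ i.castSucc)) _
  refine ⟨fun i => Fin.lastCases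
      (fun j => β * e (Fin.last n) * (-(w j)) + (-(β * B' * e (Fin.last n))) * e j.castSucc)
      (fun i j => β * (e i.castSucc * (-(w j)) + e j.castSucc * (-(w i)))
        + (-(β * B')) * (e i.castSucc * e j.castSucc)) i, ?_, ?_⟩
  · intro i j _
    simp only [Fin.lastCases_castSucc]
    ring
  · intro j
    rw [Fin.sum_univ_castSucc]
    simp only [Fin.lastCases_castSucc, Fin.lastCases_last]
    have expand : ∀ i : Fin n,
        d i.castSucc * (β * (e i.castSucc * (-(w j)) + e j.castSucc * (-(w i)))
          + (-(β * B')) * (e i.castSucc * e j.castSucc))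
        = β * (-(w j)) * (d i.castSucc * e i.castSucc)
          + β * e j.castSucc * (d i.castSucc * (-(w i)))
          + (-(β * B')) * e j.castSucc * (d i.castSucc * e i.castSucc) :=
      fun i => by ring
    rw [Finset.sum_congr rfl (fun i _ => expand i), Finset.sum_add_distrib,
      Finset.sum_add_distrib, ← Finset.mul_sum, ← Finset.mul_sum, ← Finset.mul_sum,
      hA, hB']
    exact ⟨α * w j, by linear_combination hw j + w j * hαβ⟩
end

section
/- Let g ∈ G(m,1,n) be diagonal with weights (k_1,...,k_n) and let a doubled path factorization be given: a tuple ([(1 2); a_1], [(1 2); b_1], [(2 3); a_2], [(2 3); b_2], ..., [(n−1 n); a_{n−1}], [(n−1 n); b_{n−1}]). This tuple has product g if and only if b_i = a_i + k_1 + k_2 + ⋯ + k_i for each i = 1,...,n−1 and k_1 + ⋯ + k_n = 0. Consequently, a doubled path factorization of a given diagonal element of weight 0 is uniquely determined by the sequence (a_1, ..., a_{n−1}). -/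
/-- The transposition-like reflection `[(i, i+1); c]` in `G(m, 1, n+1)`. -/
def pathFactor (m n : ℕ) (i : Fin n) (c : ZMod m) : WP m (n + 1) :=
  ⟨Equiv.swap i.castSucc i.succ,
    fun x => if x = i.castSucc then c else if x = i.succ then -c else 0⟩

/-- The doubled path `([(1 2); a_1], [(1 2); b_1], ..., [(n−1 n); a_{n−1}], [(n−1 n); b_{n−1}])`
(here in `G(m,1,n+1)`, with `n` doubled pairs). -/
def doubledPath (m n : ℕ) (a b : Fin n → ZMod m) : List (WP m (n + 1)) :=
  (List.ofFn fun i : Fin n => [pathFactor m n i (a i), pathFactor m n i (b i)]).flatten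

open Finset

theorem Finset.eq_of_forall_sum_Iic_eq {α R : Type*} [PartialOrder α] [LocallyFiniteOrderBot α]
    [WellFoundedLT α] [AddCancelCommMonoid R] {f g : α → R}
    (h : ∀ a, ∑ x ∈ Iic a, f x = ∑ x ∈ Iic a, g x) : f = g := by
  classical
  funext a
  induction a using WellFoundedLT.induction with
  | ind a ih =>
    have hlt : ∑ x ∈ Iio a, f x = ∑ x ∈ Iio a, g x := sum_congr rfl fun x hx => ih x (mem_Iio.1 hx)
    have := h a
    rwa [← Iio_insert, sum_insert notMem_Iio_self, sum_insert notMem_Iio_self, hlt,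
      add_left_inj] at this

section PathBoundary

variable {R : Type*} [AddCommGroup R] {n : ℕ}

/-- Entry `j` is `d j - d (j - 1)`, reading `d` as `0` outside `0, …, n - 1`. -/
def pathBoundary (d : Fin n → R) : Fin (n + 1) → R :=
  ∑ i, (Pi.single i.castSucc (d i) - Pi.single i.succ (d i))

theorem sum_pathBoundary_apply (d : Fin n → R) (s : Finset (Fin (n + 1))) :
    ∑ j ∈ s, pathBoundary d j =
      ∑ i, ((if i.castSucc ∈ s then d i else 0) - if i.succ ∈ s then d i else 0) := by
  simp only [pathBoundary, Finset.sum_apply, Pi.sub_apply]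
  rw [sum_comm]
  simp [sum_sub_distrib]

theorem sum_Iic_castSucc_pathBoundary (d : Fin n → R) (i : Fin n) :
    ∑ j ∈ Iic i.castSucc, pathBoundary d j = d i := by
  rw [sum_pathBoundary_apply]
  have hterm : ∀ i' : Fin n, ((if i' ≤ i then d i' else 0) - if i' < i then d i' else 0) =
      if i' = i then d i' else 0 := by
    intro i'
    rcases lt_trichotomy i' i with h | rfl | h
    · simp [h, h.le, h.ne]
    · simp
    · simp [h.not_gt, h.not_ge, h.ne']
  simp [hterm]

theorem sum_pathBoundary (d : Fin n → R) : ∑ j, pathBoundary d j = 0 := by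
  simp [sum_pathBoundary_apply]

theorem pathBoundary_eq_iff (d : Fin n → R) (k : Fin (n + 1) → R) :
    pathBoundary d = k ↔ (∀ i, d i = ∑ j ∈ Iic i.castSucc, k j) ∧ ∑ j, k j = 0 := by
  constructor
  · rintro rfl
    exact ⟨fun i => (sum_Iic_castSucc_pathBoundary d i).symm, sum_pathBoundary d⟩
  · rintro ⟨hd, hk⟩
    refine eq_of_forall_sum_Iic_eq fun j => ?_
    induction j using Fin.lastCases with
    | last => rw [← Fin.top_eq_last, Iic_top, sum_pathBoundary, hk]
    | cast i => rw [sum_Iic_castSucc_pathBoundary, hd]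

end PathBoundary

theorem WP.prod_ofFn_mk_one {m n N : ℕ} (w : Fin N → Fin n → ZMod m) :
    (List.ofFn fun i => (⟨1, w i⟩ : WP m n)).prod = ⟨1, ∑ i, w i⟩ := by
  induction N with
  | zero => rfl
  | succ N ih => rw [List.ofFn_succ, List.prod_cons, ih, Fin.sum_univ_succ]; rfl

theorem pathFactor_mul_pathFactor {m n : ℕ} (i : Fin n) (x y : ZMod m) :
    pathFactor m n i x * pathFactor m n i y =
      ⟨1, Pi.single i.castSucc (y - x) - Pi.single i.succ (y - x)⟩ := by
  have hne : i.castSucc ≠ i.succ := Fin.castSucc_lt_succ.ne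
  refine WP.ext' (Equiv.swap_mul_self _ _) fun j => ?_
  change (pathFactor m n i x).wt (Equiv.swap i.castSucc i.succ j) + (pathFactor m n i y).wt j = _
  simp only [pathFactor]
  rcases eq_or_ne j i.castSucc with rfl | h
  · simp [hne, hne.symm]; ring
  rcases eq_or_ne j i.succ with rfl | h'
  · simp [hne.symm, sub_eq_add_neg]
  · simp [Equiv.swap_apply_of_ne_of_ne h h', h, h']

theorem doubledPath_prod {m n : ℕ} (a b : Fin n → ZMod m) :
    (doubledPath m n a b).prod = ⟨1, pathBoundary (b - a)⟩ := by
  simp only [doubledPath, List.prod_flatten, List.map_ofFn, Function.comp_def, List.prod_cons,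
    List.prod_nil, mul_one, pathFactor_mul_pathFactor]
  exact WP.prod_ofFn_mk_one _

theorem doubledPath_prod_eq_iff {m n : ℕ} (a b : Fin n → ZMod m) (k : Fin (n + 1) → ZMod m) :
    (doubledPath m n a b).prod = ⟨1, k⟩ ↔
      (∀ i, b i = a i + ∑ j ∈ Iic i.castSucc, k j) ∧ ∑ j, k j = 0 := by
  simp only [doubledPath_prod, WP.mk.injEq, true_and, pathBoundary_eq_iff, Pi.sub_apply,
    sub_eq_iff_eq_add']

/-- A doubled path has product the diagonal element `[id; (k_1,...,k_n)]` if and only if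
`b_i = a_i + k_1 + ⋯ + k_i` for all `i` and `k_1 + ⋯ + k_n = 0`. Consequently, a doubled
path factorization of a given diagonal element of weight `0` is uniquely determined by
`(a_1, ..., a_{n−1})`. -/
theorem doubledPath_prod_iff (m n : ℕ) (k : Fin (n + 1) → ZMod m) :
    (∀ a b : Fin n → ZMod m,
      (doubledPath m n a b).prod = (⟨1, k⟩ : WP m (n + 1)) ↔
        ((∀ i : Fin n,
            b i = a i + ∑ j ∈ Finset.univ.filter (fun j : Fin (n + 1) => (j : ℕ) ≤ (i : ℕ)), k j) ∧
          ∑ j, k j = 0)) ∧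
    (∀ a b b' : Fin n → ZMod m,
      (doubledPath m n a b).prod = (⟨1, k⟩ : WP m (n + 1)) →
      (doubledPath m n a b').prod = (⟨1, k⟩ : WP m (n + 1)) → b = b') := by
  have filter_eq_Iic (i : Fin n) :
      univ.filter (fun j : Fin (n + 1) => (j : ℕ) ≤ (i : ℕ)) = Iic i.castSucc := by
    ext j
    simp [Fin.le_def]
  simp only [filter_eq_Iic]
  refine ⟨fun a b => doubledPath_prod_eq_iff a b k, fun a b b' h h' => funext fun i => ?_⟩
  rw [((doubledPath_prod_eq_iff a b k).1 h).1 i, ((doubledPath_prod_eq_iff a b' k).1 h').1 i]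
end

section
/- Let g ∈ G(m,1,n). If g has two cycles with nonzero weights summing to 0 in ℤ/mℤ, then g has at least two distinct maximum cycle partitions. Conversely, if g has no such pair of cycles, then the partition of the cycles of g into singletons is the unique maximum cycle partition, i.e., it is the unique cycle partition maximizing |Π| + #{parts of Π of total weight 0}. -/
open scoped Classical

/-- The partition of `Fin n` into the cycles of `g`: the setoid whose relation is
`SameCycle` for the underlying permutation of `g`. -/
def cycSetoid {m n : ℕ} (g : WP m n) : Setoid (Fin n) :=
  ⟨g.perm.SameCycle,
    ⟨fun _ => Equiv.Perm.SameCycle.refl _ _, fun h => h.symm, fun h1 h2 => h1.trans h2⟩⟩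

/-- The weight of the cycle of `g` containing `x`. -/
noncomputable def cycleWeight {m n : ℕ} (g : WP m n) (x : Fin n) : ZMod m :=
  ∑ y ∈ Finset.univ.filter (fun y : Fin n => g.perm.SameCycle x y), g.wt y

/-- A cycle partition of `g` (with `p = 1`): an equivalence relation on positions coarser
than the partition into cycles, so each part is a union of cycles of `g`. -/
def IsCyclePartition {m n : ℕ} (g : WP m n) (S : Setoid (Fin n)) : Prop :=
  ∀ x y : Fin n, g.perm.SameCycle x y → S.r x y

/-- The number of parts `|Π|` of a partition, counted via minimal representatives. -/
noncomputable def numParts {n : ℕ} (S : Setoid (Fin n)) : ℕ :=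
  (Finset.univ.filter (fun x : Fin n => ∀ y : Fin n, S.r x y → x ≤ y)).card

/-- The total weight of the part of `S` containing `x`. -/
noncomputable def partWeight {m n : ℕ} (g : WP m n) (S : Setoid (Fin n)) (x : Fin n) :
    ZMod m :=
  ∑ y ∈ Finset.univ.filter (fun y : Fin n => S.r x y), g.wt y

/-- The number of parts of total weight `0`, counted via minimal representatives. -/
noncomputable def numZeroParts {m n : ℕ} (g : WP m n) (S : Setoid (Fin n)) : ℕ :=
  (Finset.univ.filter (fun x : Fin n =>
    (∀ y : Fin n, S.r x y → x ≤ y) ∧ partWeight g S x = 0)).card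

/-- The value `v(Π) = |Π| + v_m(Π)` of a cycle partition. -/
noncomputable def value {m n : ℕ} (g : WP m n) (S : Setoid (Fin n)) : ℕ :=
  numParts S + numZeroParts g S

/-- A maximum cycle partition: a cycle partition attaining the maximal value. -/
def IsMaxPartition {m n : ℕ} (g : WP m n) (S : Setoid (Fin n)) : Prop :=
  IsCyclePartition g S ∧
    ∀ S' : Setoid (Fin n), IsCyclePartition g S' → value g S' ≤ value g S

namespace MaxCyc

open Finset

variable {m n : ℕ}

noncomputable def cls (S : Setoid (Fin n)) (x : Fin n) : Finset (Fin n) :=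
  Finset.univ.filter (fun y : Fin n => S.r x y)

lemma mem_cls {S : Setoid (Fin n)} {x y : Fin n} : y ∈ cls S x ↔ S.r x y := by
  simp [cls]

lemma self_mem_cls (S : Setoid (Fin n)) (x : Fin n) : x ∈ cls S x :=
  mem_cls.mpr (S.refl x)

noncomputable def rep (S : Setoid (Fin n)) (x : Fin n) : Fin n :=
  (cls S x).min' ⟨x, self_mem_cls S x⟩

lemma rel_rep (S : Setoid (Fin n)) (x : Fin n) : S.r x (rep S x) :=
  mem_cls.mp ((cls S x).min'_mem _)

lemma rep_le {S : Setoid (Fin n)} {x y : Fin n} (h : S.r x y) : rep S x ≤ y :=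
  Finset.min'_le _ _ (mem_cls.mpr h)

noncomputable def reps (S : Setoid (Fin n)) : Finset (Fin n) :=
  Finset.univ.filter (fun x : Fin n => ∀ y : Fin n, S.r x y → x ≤ y)

lemma mem_reps {S : Setoid (Fin n)} {x : Fin n} :
    x ∈ reps S ↔ ∀ y : Fin n, S.r x y → x ≤ y := by
  simp [reps]

lemma rep_mem_reps (S : Setoid (Fin n)) (x : Fin n) : rep S x ∈ reps S := by
  rw [mem_reps]
  intro y hy
  exact rep_le (S.trans (rel_rep S x) hy)

lemma rep_eq_of_rel {S : Setoid (Fin n)} {x y : Fin n} (h : S.r x y) :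
    rep S x = rep S y :=
  le_antisymm (rep_le (S.trans h (rel_rep S y))) (rep_le (S.trans (S.symm h) (rel_rep S x)))

lemma rep_of_mem_reps {S : Setoid (Fin n)} {x : Fin n} (hx : x ∈ reps S) : rep S x = x :=
  le_antisymm (rep_le (S.refl x)) (mem_reps.mp hx _ (rel_rep S x))

lemma rel_of_rep_eq {S : Setoid (Fin n)} {x y : Fin n} (h : rep S x = rep S y) :
    S.r x y := by
  have hy := rel_rep S y
  rw [← h] at hy
  exact S.trans (rel_rep S x) (S.symm hy)

variable (g : WP m n)

lemma numParts_eq (S : Setoid (Fin n)) : numParts S = (reps S).card := rfl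

lemma numZeroParts_eq (S : Setoid (Fin n)) :
    numZeroParts g S = ((reps S).filter (fun x => partWeight g S x = 0)).card := by
  apply congrArg Finset.card
  ext x
  simp [numZeroParts, reps, Finset.mem_filter]

lemma value_eq_sum (S : Setoid (Fin n)) :
    value g S = ∑ x ∈ reps S, (1 + if partWeight g S x = 0 then 1 else 0) := by
  rw [value, numParts_eq, numZeroParts_eq g S, Finset.card_filter,
    Finset.sum_add_distrib, Finset.sum_const, smul_eq_mul, mul_one]

lemma cycSetoid_r {x y : Fin n} : (cycSetoid g).r x y ↔ g.perm.SameCycle x y := Iff.rfl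

lemma partWeight_cyc (x : Fin n) : partWeight g (cycSetoid g) x = cycleWeight g x := by
  unfold partWeight cycleWeight
  apply Finset.sum_congr _ (fun _ _ => rfl)
  ext z
  simp only [Finset.mem_filter, Finset.mem_univ, true_and]
  exact cycSetoid_r g

lemma cycleWeight_eq_sum_cls (x : Fin n) :
    cycleWeight g x = ∑ y ∈ cls (cycSetoid g) x, g.wt y := by
  unfold cycleWeight cls
  apply Finset.sum_congr _ (fun _ _ => rfl)
  ext z
  simp only [Finset.mem_filter, Finset.mem_univ, true_and]
  exact (cycSetoid_r g).symm

lemma cycleWeight_congr {x y : Fin n} (h : g.perm.SameCycle x y) :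
    cycleWeight g x = cycleWeight g y := by
  unfold cycleWeight
  apply Finset.sum_congr _ (fun _ _ => rfl)
  ext z
  simp only [Finset.mem_filter, Finset.mem_univ, true_and]
  exact ⟨fun hz => h.symm.trans hz, fun hz => h.trans hz⟩

lemma reps_subset_repsC {S : Setoid (Fin n)} (hS : IsCyclePartition g S) :
    reps S ⊆ reps (cycSetoid g) := by
  intro r hr
  rw [mem_reps]
  intro y hy
  exact mem_reps.mp hr y (hS _ _ hy)

noncomputable def fib (S : Setoid (Fin n)) (r : Fin n) : Finset (Fin n) :=
  (reps (cycSetoid g)).filter (fun x => rep S x = r)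

lemma mem_fib {S : Setoid (Fin n)} {r x : Fin n} :
    x ∈ fib g S r ↔ x ∈ reps (cycSetoid g) ∧ rep S x = r := by
  simp [fib]

lemma self_mem_fib {S : Setoid (Fin n)} (hS : IsCyclePartition g S) {r : Fin n}
    (hr : r ∈ reps S) : r ∈ fib g S r :=
  mem_fib g |>.mpr ⟨reps_subset_repsC g hS hr, rep_of_mem_reps hr⟩

lemma partWeight_eq_sum_fib {S : Setoid (Fin n)} (hS : IsCyclePartition g S) {r : Fin n}
    (hr : r ∈ reps S) :
    partWeight g S r = ∑ x ∈ fib g S r, cycleWeight g x := by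
  have hmap : ∀ y ∈ cls S r, rep (cycSetoid g) y ∈ fib g S r := by
    intro y hy
    rw [mem_fib]
    refine ⟨rep_mem_reps _ _, ?_⟩
    have h1 : S.r y (rep (cycSetoid g) y) := hS _ _ (rel_rep (cycSetoid g) y)
    rw [← rep_eq_of_rel h1, ← rep_eq_of_rel (mem_cls.mp hy), rep_of_mem_reps hr]
  have key := Finset.sum_fiberwise_of_maps_to hmap g.wt
  have hpw : partWeight g S r = ∑ y ∈ cls S r, g.wt y := rfl
  rw [hpw, ← key]
  unfold fib
  apply Finset.sum_congr rfl
  intro x hx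
  rw [Finset.mem_filter] at hx
  have hset : (cls S r).filter (fun y => rep (cycSetoid g) y = x) = cls (cycSetoid g) x := by
    ext z
    simp only [Finset.mem_filter, mem_cls]
    constructor
    · rintro ⟨hz1, hz2⟩
      exact rel_of_rep_eq (by rw [hz2, rep_of_mem_reps hx.1])
    · intro hz
      refine ⟨?_, ?_⟩
      · have hrx : S.r r x := S.symm (rel_of_rep_eq (S := S) (by rw [hx.2, rep_of_mem_reps hr]))
        exact S.trans hrx (hS _ _ hz)
      · rw [← rep_eq_of_rel (S := cycSetoid g) hz, rep_of_mem_reps hx.1]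
  rw [hset, ← cycleWeight_eq_sum_cls]

lemma valueC_eq_sum :
    value g (cycSetoid g) =
      ∑ x ∈ reps (cycSetoid g), (1 + if cycleWeight g x = 0 then 1 else 0) := by
  rw [value_eq_sum]
  exact Finset.sum_congr rfl (fun x _ => by rw [partWeight_cyc])

lemma valueC_decomp (S : Setoid (Fin n)) :
    value g (cycSetoid g) =
      ∑ r ∈ reps S, ∑ x ∈ fib g S r, (1 + if cycleWeight g x = 0 then 1 else 0) := by
  rw [valueC_eq_sum]
  have hmap : ∀ x ∈ reps (cycSetoid g), rep S x ∈ reps S := fun x _ => rep_mem_reps S x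
  rw [← Finset.sum_fiberwise_of_maps_to hmap
    (fun x => (1 + if cycleWeight g x = 0 then 1 else 0))]
  rfl

lemma card_le_sumF (s : Finset (Fin n)) :
    s.card ≤ ∑ x ∈ s, (1 + if cycleWeight g x = 0 then 1 else 0) :=
  calc s.card = ∑ _x ∈ s, 1 := by simp
    _ ≤ _ := Finset.sum_le_sum (fun x _ => Nat.le_add_right 1 _)

lemma fiber_le {S : Setoid (Fin n)} (hS : IsCyclePartition g S) {r : Fin n}
    (hr : r ∈ reps S) :
    (1 + if partWeight g S r = 0 then 1 else 0) ≤
      ∑ x ∈ fib g S r, (1 + if cycleWeight g x = 0 then 1 else 0) := by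
  have hrf := self_mem_fib g hS hr
  by_cases h2 : 2 ≤ (fib g S r).card
  · have h3 : (1 + if partWeight g S r = 0 then 1 else 0) ≤ 2 := by split <;> omega
    exact h3.trans (h2.trans (card_le_sumF g _))
  · have h1 : (fib g S r).card = 1 := by
      have := Finset.card_pos.mpr ⟨r, hrf⟩
      omega
    obtain ⟨a, ha⟩ := Finset.card_eq_one.mp h1
    have hra : r = a := by rw [ha] at hrf; simpa using hrf
    subst hra
    rw [partWeight_eq_sum_fib g hS hr, ha, Finset.sum_singleton, Finset.sum_singleton]

lemma value_le {S : Setoid (Fin n)} (hS : IsCyclePartition g S) :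
    value g S ≤ value g (cycSetoid g) := by
  rw [value_eq_sum g S, valueC_decomp g S]
  exact Finset.sum_le_sum (fun r hr => fiber_le g hS hr)

lemma fiber_lt {S : Setoid (Fin n)}
    (hnb : ¬ ∃ x y : Fin n, ¬ g.perm.SameCycle x y ∧ cycleWeight g x ≠ 0 ∧
      cycleWeight g y ≠ 0 ∧ cycleWeight g x + cycleWeight g y = 0)
    (hS : IsCyclePartition g S) {r : Fin n} (hr : r ∈ reps S)
    (hcard : 2 ≤ (fib g S r).card) :
    (1 + if partWeight g S r = 0 then 1 else 0) <
      ∑ x ∈ fib g S r, (1 + if cycleWeight g x = 0 then 1 else 0) := by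
  have hcs := card_le_sumF g (fib g S r)
  by_cases hpw : partWeight g S r = 0
  · rw [if_pos hpw]
    by_cases hzero : ∃ x ∈ fib g S r, cycleWeight g x = 0
    · obtain ⟨x0, hx0, hw0⟩ := hzero
      have h1 : 1 ≤ ∑ x ∈ fib g S r, (if cycleWeight g x = 0 then 1 else 0) := by
        refine le_trans (le_of_eq ?_) (Finset.single_le_sum
          (f := fun x => if cycleWeight g x = 0 then 1 else 0)
          (fun _ _ => Nat.zero_le _) hx0)
        simp [hw0]
      have h2 : (fib g S r).card + 1 ≤
          ∑ x ∈ fib g S r, (1 + if cycleWeight g x = 0 then 1 else 0) := by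
        rw [Finset.sum_add_distrib, Finset.sum_const, smul_eq_mul, mul_one]
        omega
      omega
    · push_neg at hzero
      by_cases hc3 : 3 ≤ (fib g S r).card
      · omega
      · have hc2 : (fib g S r).card = 2 := by omega
        obtain ⟨a, b, hab, hset⟩ := Finset.card_eq_two.mp hc2
        have ha : a ∈ fib g S r := by rw [hset]; simp
        have hb : b ∈ fib g S r := by rw [hset]; simp
        have hnc : ¬ g.perm.SameCycle a b := by
          intro h
          apply hab
          calc a = rep (cycSetoid g) a := (rep_of_mem_reps ((mem_fib g).mp ha).1).symm
            _ = rep (cycSetoid g) b := rep_eq_of_rel (S := cycSetoid g) h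
            _ = b := rep_of_mem_reps ((mem_fib g).mp hb).1
        have hpw2 : cycleWeight g a + cycleWeight g b = 0 := by
          rw [← hpw, partWeight_eq_sum_fib g hS hr, hset, Finset.sum_pair hab]
        exact absurd ⟨a, b, hnc, hzero a ha, hzero b hb, hpw2⟩ hnb
  · rw [if_neg hpw]
    omega

lemma value_lt {S : Setoid (Fin n)}
    (hnb : ¬ ∃ x y : Fin n, ¬ g.perm.SameCycle x y ∧ cycleWeight g x ≠ 0 ∧
      cycleWeight g y ≠ 0 ∧ cycleWeight g x + cycleWeight g y = 0)
    (hS : IsCyclePartition g S) (hne : S ≠ cycSetoid g) :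
    value g S < value g (cycSetoid g) := by
  have hex : ∃ a b : Fin n, S.r a b ∧ ¬ g.perm.SameCycle a b := by
    by_contra h
    push_neg at h
    apply hne
    apply Setoid.ext
    intro a b
    exact ⟨fun h' => h a b h', fun h' => hS a b h'⟩
  obtain ⟨a, b, hab, hnab⟩ := hex
  have hr : rep S a ∈ reps S := rep_mem_reps S a
  have ha' : rep (cycSetoid g) a ∈ fib g S (rep S a) := by
    rw [mem_fib]
    exact ⟨rep_mem_reps _ _, (rep_eq_of_rel (hS _ _ (rel_rep (cycSetoid g) a))).symm⟩
  have hb' : rep (cycSetoid g) b ∈ fib g S (rep S a) := by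
    rw [mem_fib]
    refine ⟨rep_mem_reps _ _, ?_⟩
    rw [← rep_eq_of_rel (hS _ _ (rel_rep (cycSetoid g) b)), ← rep_eq_of_rel hab]
  have hne2 : rep (cycSetoid g) a ≠ rep (cycSetoid g) b :=
    fun h => hnab (rel_of_rep_eq (S := cycSetoid g) h)
  have hcard : 2 ≤ (fib g S (rep S a)).card :=
    Finset.one_lt_card.mpr ⟨_, ha', _, hb', hne2⟩
  rw [value_eq_sum g S, valueC_decomp g S]
  exact Finset.sum_lt_sum (fun i hi => fiber_le g hS hi)
    ⟨rep S a, hr, fiber_lt g hnb hS hr hcard⟩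

def mergeSetoid (x y : Fin n) (hnxy : ¬ g.perm.SameCycle x y) : Setoid (Fin n) where
  r a b := g.perm.SameCycle a b ∨ (g.perm.SameCycle a x ∧ g.perm.SameCycle b y) ∨
    (g.perm.SameCycle a y ∧ g.perm.SameCycle b x)
  iseqv := by
    constructor
    · intro a
      exact Or.inl (Equiv.Perm.SameCycle.refl _ _)
    · intro a b h
      rcases h with h | ⟨h1, h2⟩ | ⟨h1, h2⟩
      · exact Or.inl h.symm
      · exact Or.inr (Or.inr ⟨h2, h1⟩)
      · exact Or.inr (Or.inl ⟨h2, h1⟩)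
    · intro a b c hab hbc
      rcases hab with h | ⟨h1, h2⟩ | ⟨h1, h2⟩ <;>
        rcases hbc with h' | ⟨h1', h2'⟩ | ⟨h1', h2'⟩
      · exact Or.inl (h.trans h')
      · exact Or.inr (Or.inl ⟨h.trans h1', h2'⟩)
      · exact Or.inr (Or.inr ⟨h.trans h1', h2'⟩)
      · exact Or.inr (Or.inl ⟨h1, h'.symm.trans h2⟩)
      · exact absurd (h1'.symm.trans h2) hnxy
      · exact Or.inl (h1.trans h2'.symm)
      · exact Or.inr (Or.inr ⟨h1, h'.symm.trans h2⟩)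
      · exact Or.inl (h1.trans h2'.symm)
      · exact absurd (h2.symm.trans h1') hnxy

lemma merge_value {S₂ : Setoid (Fin n)} {x y : Fin n} (hnxy : ¬ g.perm.SameCycle x y)
    (hx0 : cycleWeight g x ≠ 0) (hy0 : cycleWeight g y ≠ 0)
    (hsum : cycleWeight g x + cycleWeight g y = 0)
    (hiff : ∀ a b : Fin n, S₂.r a b ↔ (g.perm.SameCycle a b ∨
      (g.perm.SameCycle a x ∧ g.perm.SameCycle b y) ∨
      (g.perm.SameCycle a y ∧ g.perm.SameCycle b x))) :
    value g S₂ = value g (cycSetoid g) := by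
  have hS2 : IsCyclePartition g S₂ := fun a b h => (hiff a b).mpr (Or.inl h)
  have hS2xy : S₂.r x y := (hiff x y).mpr (Or.inr (Or.inl
    ⟨Equiv.Perm.SameCycle.refl _ _, Equiv.Perm.SameCycle.refl _ _⟩))
  rw [value_eq_sum g S₂, valueC_decomp g S₂]
  apply Finset.sum_congr rfl
  intro r hr
  by_cases hrx : S₂.r r x
  · have hfib : fib g S₂ r = {rep (cycSetoid g) x, rep (cycSetoid g) y} := by
      ext z
      rw [mem_fib]
      simp only [Finset.mem_insert, Finset.mem_singleton]
      constructor
      · rintro ⟨hz1, hz2⟩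
        have hzr : S₂.r z r := rel_of_rep_eq (S := S₂) (by rw [hz2, rep_of_mem_reps hr])
        have hzx := (hiff z x).mp (S₂.trans hzr hrx)
        rcases hzx with h | ⟨h, _⟩ | ⟨h, _⟩
        · left
          rw [← rep_of_mem_reps hz1, rep_eq_of_rel (S := cycSetoid g) h]
        · left
          rw [← rep_of_mem_reps hz1, rep_eq_of_rel (S := cycSetoid g) h]
        · right
          rw [← rep_of_mem_reps hz1, rep_eq_of_rel (S := cycSetoid g) h]
      · rintro (rfl | rfl)
        · refine ⟨rep_mem_reps _ _, ?_⟩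
          have h1 : S₂.r x (rep (cycSetoid g) x) :=
            (hiff _ _).mpr (Or.inl (rel_rep (cycSetoid g) x))
          exact (rep_eq_of_rel h1).symm.trans
            ((rep_eq_of_rel (S₂.symm hrx)).trans (rep_of_mem_reps hr))
        · refine ⟨rep_mem_reps _ _, ?_⟩
          have h1 : S₂.r y (rep (cycSetoid g) y) :=
            (hiff _ _).mpr (Or.inl (rel_rep (cycSetoid g) y))
          exact (rep_eq_of_rel h1).symm.trans ((rep_eq_of_rel (S₂.symm hS2xy)).trans
            ((rep_eq_of_rel (S₂.symm hrx)).trans (rep_of_mem_reps hr)))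
    have hne' : rep (cycSetoid g) x ≠ rep (cycSetoid g) y :=
      fun h => hnxy (rel_of_rep_eq (S := cycSetoid g) h)
    have hcwx : cycleWeight g (rep (cycSetoid g) x) = cycleWeight g x :=
      (cycleWeight_congr g (rel_rep (cycSetoid g) x)).symm
    have hcwy : cycleWeight g (rep (cycSetoid g) y) = cycleWeight g y :=
      (cycleWeight_congr g (rel_rep (cycSetoid g) y)).symm
    have hpw : partWeight g S₂ r = 0 := by
      rw [partWeight_eq_sum_fib g hS2 hr, hfib, Finset.sum_pair hne', hcwx, hcwy, hsum]
    rw [hfib, Finset.sum_pair hne', hpw, if_pos rfl, hcwx, hcwy, if_neg hx0, if_neg hy0]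
  · have hfib : fib g S₂ r = {r} := by
      ext z
      rw [mem_fib]
      simp only [Finset.mem_singleton]
      constructor
      · rintro ⟨hz1, hz2⟩
        have hzr : S₂.r z r := rel_of_rep_eq (S := S₂) (by rw [hz2, rep_of_mem_reps hr])
        have hCzr : g.perm.SameCycle z r := by
          rcases (hiff z r).mp hzr with h | ⟨h1, h2⟩ | ⟨h1, h2⟩
          · exact h
          · exact absurd ((hiff r x).mpr (Or.inr (Or.inr
              ⟨h2, Equiv.Perm.SameCycle.refl _ _⟩))) hrx
          · exact absurd ((hiff r x).mpr (Or.inl h2)) hrx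
        calc z = rep (cycSetoid g) z := (rep_of_mem_reps hz1).symm
          _ = rep (cycSetoid g) r := rep_eq_of_rel (S := cycSetoid g) hCzr
          _ = r := rep_of_mem_reps (reps_subset_repsC g hS2 hr)
      · rintro rfl
        exact ⟨reps_subset_repsC g hS2 hr, rep_of_mem_reps hr⟩
    have hpw : partWeight g S₂ r = cycleWeight g r := by
      rw [partWeight_eq_sum_fib g hS2 hr, hfib, Finset.sum_singleton]
    rw [hfib, Finset.sum_singleton, hpw]

end MaxCyc


/-- If `g ∈ G(m,1,n)` has two cycles with nonzero weights summing to `0`, then it has at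
least two distinct maximum cycle partitions; conversely, if it has no such pair of cycles,
then the partition into single cycles is the unique maximum cycle partition. -/
theorem max_cycle_partitions (m n : ℕ) (hm : 0 < m) (g : WP m n) :
    ((∃ x y : Fin n, ¬ g.perm.SameCycle x y ∧ cycleWeight g x ≠ 0 ∧ cycleWeight g y ≠ 0 ∧
        cycleWeight g x + cycleWeight g y = 0) →
      ∃ S₁ S₂ : Setoid (Fin n), S₁ ≠ S₂ ∧ IsMaxPartition g S₁ ∧ IsMaxPartition g S₂) ∧
    ((¬ ∃ x y : Fin n, ¬ g.perm.SameCycle x y ∧ cycleWeight g x ≠ 0 ∧ cycleWeight g y ≠ 0 ∧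
        cycleWeight g x + cycleWeight g y = 0) →
      IsMaxPartition g (cycSetoid g) ∧
        ∀ S : Setoid (Fin n), IsMaxPartition g S → S = cycSetoid g) := by
  constructor
  · rintro ⟨x, y, hnxy, hx0, hy0, hsum⟩
    refine ⟨MaxCyc.mergeSetoid g x y hnxy, cycSetoid g, ?_, ?_, ?_⟩
    · intro h
      apply hnxy
      have hxy : (MaxCyc.mergeSetoid g x y hnxy).r x y :=
        Or.inr (Or.inl ⟨Equiv.Perm.SameCycle.refl _ _, Equiv.Perm.SameCycle.refl _ _⟩)
      rw [h] at hxy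
      exact hxy
    · refine ⟨fun a b h => Or.inl h, fun S' hS' => ?_⟩
      rw [MaxCyc.merge_value g (S₂ := MaxCyc.mergeSetoid g x y hnxy) hnxy hx0 hy0 hsum (fun a b => Iff.rfl)]
      exact MaxCyc.value_le g hS'
    · exact ⟨fun a b h => h, fun S' hS' => MaxCyc.value_le g hS'⟩
  · intro hnb
    refine ⟨⟨fun a b h => h, fun S' hS' => MaxCyc.value_le g hS'⟩, fun S hS => ?_⟩
    by_contra hne
    exact absurd (hS.2 (cycSetoid g) (fun a b h => h))
      (Nat.not_le.mpr (MaxCyc.value_lt g hnb hS.1 hne))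
end
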